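/- arXiv:2103.04630 — 3 statements merged into one kernel-verified Lean document; each statement's English description precedes it below -/
import Mathlib

section
/- The Moyal star-product f*g := ∑_{n≥0} ∑_{k_1+k_2=n} ((-1)^{k_2}(iεμ)^n/(2^n k_1! k_2!)) (∂_x^{k_1}∂_y^{k_2} f)(∂_x^{k_2}∂_y^{k_1} g) is associative: for all f, g, h in the algebra of differential polynomials in two space variables, (f*g)*h = f*(g*h). -/
noncomputable section

variable {A : Type} [CommRing A] [Algebra ℂ A]

/-- The algebra `𝒜 := A[[ε,μ]]` of differential polynomials: formal power series in two
variables `ε` (index `0`) and `μ` (index `1`) with coefficients in a commutative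
`ℂ`-algebra `A` (playing the role of `ℂ[[u_{*,*}]]`). -/
abbrev DPoly (A : Type) [CommRing A] := MvPowerSeries (Fin 2) A

/-- Coefficientwise extension of a map `d : A → A` (e.g. `∂_x` or `∂_y`) to `A[[ε,μ]]`;
this matches the fact that `∂_x, ∂_y` do not act on `ε, μ`. -/
def ext (d : A → A) (f : DPoly A) : DPoly A := fun s => d (f s)

/-- The exponent vector of the monomial `εμ`. -/
def epsmu : Fin 2 →₀ ℕ := Finsupp.single 0 1 + Finsupp.single 1 1

/-- The `(k₁,k₂)`-th term `((-1)^{k₂} i^{k₁+k₂} / (2^{k₁+k₂} k₁! k₂!)) •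
(∂_x^{k₁}∂_y^{k₂} f)(∂_x^{k₂}∂_y^{k₁} g)` of the Moyal product (without the `(εμ)^n` factor). -/
def moyalTerm (dx dy : A → A) (f g : DPoly A) (k₁ k₂ : ℕ) : DPoly A :=
  (((-1 : ℂ) ^ k₂ * Complex.I ^ (k₁ + k₂)) / (2 ^ (k₁ + k₂) * k₁.factorial * k₂.factorial)) •
    ((ext dx)^[k₁] ((ext dy)^[k₂] f) * (ext dx)^[k₂] ((ext dy)^[k₁] g))

/-- The Moyal star-product
`f*g := ∑_{n≥0} ∑_{k₁+k₂=n} ((-1)^{k₂} (iεμ)^n / (2^n k₁! k₂!)) (∂_x^{k₁}∂_y^{k₂} f)(∂_x^{k₂}∂_y^{k₁} g)`,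
defined coefficientwise (for a given exponent `s` of `ε^{s 0} μ^{s 1}`, only the terms with
`n ≤ min (s 0) (s 1)` contribute, the factor `(εμ)^n` shifting exponents by `n·(1,1)`). -/
def moyal (dx dy : A → A) (f g : DPoly A) : DPoly A := fun s =>
  ∑ n ∈ Finset.range (min (s 0) (s 1) + 1), ∑ k₁ ∈ Finset.range (n + 1),
    MvPowerSeries.coeff (s - n • epsmu) (moyalTerm dx dy f g k₁ (n - k₁))

/-- Restriction `μ = 0`: keep only the coefficients with `μ`-exponent zero. -/
def setMuZero (f : DPoly A) : PowerSeries A :=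
  PowerSeries.mk fun n => MvPowerSeries.coeff (Finsupp.single 0 n) f

end

/-!
Encode bidifferential operators by symbols: a polynomial in variables `ξᵢ = X (i, 0)`,
`ηᵢ = X (i, 1)`, one pair for each member `uᵢ` of a family, acts on the family by sending
`∏ ξᵢ ^ aᵢ * ηᵢ ^ bᵢ` to `∏ ∂ₓ^aᵢ ∂_y^bᵢ uᵢ`. Since `∂ₓ, ∂_y` are commuting derivations, the
Leibniz rule says that differentiating the result multiplies the symbol by `∑ ξᵢ` (resp. `∑ ηᵢ`),
and products of results correspond to products of symbols in disjoint variables.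

The coefficient of `(εμ)ⁿ` in `u * v` then has symbol `ωⁿ / n!`, where
`ω = (i/2) (∑ ξ_u) (∑ η_v) - (i/2) (∑ η_u) (∑ ξ_v)`. As `ω` is additive in each family, the
binomial theorem shows that in both bracketings of `f * g * h` the coefficient of `(εμ)ᴺ` has the
same symbol `(ω₁₂ + ω₁₃ + ω₂₃)ᴺ / N!`.
-/

open Finset

theorem Derivation.map_prod_eq_sum_update {R B ι : Type*} [CommSemiring R] [CommSemiring B]
    [Algebra R B] [DecidableEq ι] (D : Derivation R B B) (s : Finset ι) (f : ι → B) :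
    D (∏ i ∈ s, f i) = ∑ i ∈ s, ∏ j ∈ s, Function.update f i (D (f i)) j := by
  induction s using Finset.induction_on with
  | empty => simp
  | insert a s ha ih =>
    have hupd : ∀ i ∈ s, Function.update f i (D (f i)) a = f a := fun i hi =>
      Function.update_of_ne (ne_of_mem_of_not_mem hi ha).symm _ _
    have hfix : ∏ j ∈ s, Function.update f a (D (f a)) j = ∏ j ∈ s, f j :=
      prod_congr rfl fun j hj => Function.update_of_ne (ne_of_mem_of_not_mem hj ha) _ _
    rw [prod_insert ha, Derivation.leibniz, ih, sum_insert ha, prod_insert ha,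
      Function.update_self, hfix, smul_eq_mul, smul_eq_mul, mul_sum, add_comm, mul_comm]
    congr 1
    exact sum_congr rfl fun i hi => by rw [prod_insert ha, hupd i hi]

section MapDomain

variable {α β γ : Type*}

lemma Finsupp.mapDomain_prodMap_apply {f : α → β} (hf : Function.Injective f)
    (m : α × γ →₀ ℕ) (a : α) (c : γ) : Finsupp.mapDomain (Prod.map f id) m (f a, c) = m (a, c) :=
  Finsupp.mapDomain_apply (hf.prodMap Function.injective_id) m (a, c)

lemma Finsupp.mapDomain_prodMap_apply_of_notMem_range {f : α → β} (m : α × γ →₀ ℕ) {b : β}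
    (hb : b ∉ Set.range f) (c : γ) : Finsupp.mapDomain (Prod.map f id) m (b, c) = 0 :=
  Finsupp.mapDomain_of_notMem_range _ _ fun ⟨x, hx⟩ => hb ⟨x.1, congrArg Prod.fst hx⟩

end MapDomain

open Nat in
theorem sum_range_factorial_smul_pow_mul_pow {K R : Type*} [Field K] [CharZero K] [CommSemiring R]
    [Algebra K R] (x y : R) (n : ℕ) :
    ∑ k ∈ range (n + 1), ((k ! : K)⁻¹ • x ^ k) * (((n - k)! : K)⁻¹ • y ^ (n - k)) =
      (n ! : K)⁻¹ • (x + y) ^ n := by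
  rw [add_pow, smul_sum]
  refine sum_congr rfl fun k hk => ?_
  have hkn : k ≤ n := Nat.lt_succ_iff.1 (mem_range.1 hk)
  have hchoose : (n.choose k : K) * k ! * (n - k)! = n ! := by
    exact_mod_cast Nat.choose_mul_factorial_mul_factorial hkn
  have hpos : (n.choose k : K) ≠ 0 := Nat.cast_ne_zero.2 (Nat.choose_pos hkn).ne'
  rw [smul_mul_smul_comm, mul_comm _ (n.choose k : R), ← nsmul_eq_mul,
    ← Nat.cast_smul_eq_nsmul K, smul_smul, ← hchoose]
  congr 1
  field_simp

lemma moyalTerm_scalar_eq (k l : ℕ) :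
    ((-1 : ℂ) ^ l * Complex.I ^ (k + l)) / (2 ^ (k + l) * k.factorial * l.factorial) =
      ((k.factorial : ℂ)⁻¹ * (l.factorial : ℂ)⁻¹) *
        ((Complex.I / 2) ^ k * (-Complex.I / 2) ^ l) := by
  rw [div_pow, div_pow, neg_pow Complex.I, pow_add, pow_add]
  field_simp

noncomputable section

section Expansion

variable {A : Type} [CommRing A]

lemma nsmul_epsmu_apply (n : ℕ) (i : Fin 2) : (n • epsmu) i = n := by
  fin_cases i <;> simp [epsmu]

lemma min_tsub_nsmul_epsmu (s : Fin 2 →₀ ℕ) (n : ℕ) :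
    min ((s - n • epsmu) 0) ((s - n • epsmu) 1) = min (s 0) (s 1) - n := by
  simp only [Finsupp.tsub_apply, nsmul_epsmu_apply]
  omega

/-- `F = ∑ₙ (εμ)ⁿ T n`, read off coefficientwise. -/
def HasEpsMuExpansion (F : DPoly A) (T : ℕ → DPoly A) : Prop :=
  ∀ s : Fin 2 →₀ ℕ, MvPowerSeries.coeff s F =
    ∑ n ∈ range (min (s 0) (s 1) + 1), MvPowerSeries.coeff (s - n • epsmu) (T n)

def epsMuPartialSum (T : ℕ → DPoly A) (K : ℕ) : DPoly A :=
  ∑ n ∈ range K, MvPowerSeries.monomial (n • epsmu) 1 * T n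

lemma coeff_epsMuPartialSum (T : ℕ → DPoly A) {K : ℕ} {s : Fin 2 →₀ ℕ}
    (hK : min (s 0) (s 1) < K) :
    MvPowerSeries.coeff s (epsMuPartialSum T K) =
      ∑ n ∈ range (min (s 0) (s 1) + 1), MvPowerSeries.coeff (s - n • epsmu) (T n) := by
  have hle : ∀ n, n • epsmu ≤ s ↔ n ≤ min (s 0) (s 1) := fun n => by
    simp [Finsupp.le_def, Fin.forall_fin_two, nsmul_epsmu_apply]
  simp only [epsMuPartialSum, map_sum, MvPowerSeries.coeff_monomial_mul, one_mul, hle,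
    ← sum_filter]
  congr 1
  ext n
  simp only [mem_filter, mem_range]
  omega

lemma coeff_mul_eq_of_coeff_eq {F F' : DPoly A} {s : Fin 2 →₀ ℕ}
    (h : ∀ t ≤ s, MvPowerSeries.coeff t F = MvPowerSeries.coeff t F') (W : DPoly A) :
    MvPowerSeries.coeff s (F * W) = MvPowerSeries.coeff s (F' * W) := by
  classical
  simp only [MvPowerSeries.coeff_mul]
  refine sum_congr rfl fun p hp => ?_
  rw [h p.1 ((HasAntidiagonal.mem_antidiagonal.1 hp) ▸ le_self_add)]

namespace HasEpsMuExpansion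

variable {F G : DPoly A} {T : ℕ → DPoly A}

lemma unique (hF : HasEpsMuExpansion F T) (hG : HasEpsMuExpansion G T) : F = G :=
  MvPowerSeries.ext fun s => (hF s).trans (hG s).symm

lemma bind (hF : HasEpsMuExpansion F T) {U : ℕ → ℕ → DPoly A}
    (hT : ∀ n, HasEpsMuExpansion (T n) (U n)) :
    HasEpsMuExpansion F fun N => ∑ j ∈ range (N + 1), U j (N - j) := by
  intro s
  set m := min (s 0) (s 1)
  have hinner : ∀ n ∈ range (m + 1), MvPowerSeries.coeff (s - n • epsmu) (T n) =
      ∑ j ∈ range (m + 1 - n), MvPowerSeries.coeff (s - (n + j) • epsmu) (U n j) := by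
    intro n hn
    have hnm : n ≤ m := Nat.lt_succ_iff.1 (mem_range.1 hn)
    rw [hT n, min_tsub_nsmul_epsmu, show m - n + 1 = m + 1 - n by omega]
    simp only [add_nsmul, tsub_tsub]
  rw [hF s, sum_congr rfl hinner, ← sum_range_diag_flip]
  refine sum_congr rfl fun N _ => ?_
  rw [map_sum]
  refine sum_congr rfl fun j hj => ?_
  rw [Nat.add_sub_cancel' (Nat.lt_succ_iff.1 (mem_range.1 hj))]

lemma mul_right (hF : HasEpsMuExpansion F T) (W : DPoly A) :
    HasEpsMuExpansion (F * W) fun n => T n * W := by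
  intro s
  have hpartial : ∀ t ≤ s,
      MvPowerSeries.coeff t F = MvPowerSeries.coeff t (epsMuPartialSum T (min (s 0) (s 1) + 1)) :=
    fun t ht => (hF t).trans (coeff_epsMuPartialSum T (Nat.lt_succ_of_le
      (min_le_min (ht 0) (ht 1)))).symm
  rw [coeff_mul_eq_of_coeff_eq hpartial, epsMuPartialSum, sum_mul,
    ← coeff_epsMuPartialSum _ (Nat.lt_succ_self _)]
  simp only [epsMuPartialSum, mul_assoc]

lemma mul_left (hF : HasEpsMuExpansion F T) (W : DPoly A) :
    HasEpsMuExpansion (W * F) fun n => W * T n := by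
  simpa only [mul_comm W] using hF.mul_right W

lemma smul {S : Type*} [Semiring S] [Module S A] (hF : HasEpsMuExpansion F T) (c : S) :
    HasEpsMuExpansion (c • F) fun n => c • T n := by
  intro s
  change c • MvPowerSeries.coeff s F = _
  rw [hF s, smul_sum]
  rfl

lemma sum {ι : Type*} (t : Finset ι) {F : ι → DPoly A} {T : ι → ℕ → DPoly A}
    (hF : ∀ i ∈ t, HasEpsMuExpansion (F i) (T i)) :
    HasEpsMuExpansion (∑ i ∈ t, F i) fun n => ∑ i ∈ t, T i n := by
  intro s
  simp only [map_sum]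
  rw [sum_comm]
  exact sum_congr rfl fun i hi => hF i hi s

lemma map_ext {D : Type*} [FunLike D A A] [AddMonoidHomClass D A A]
    (hF : HasEpsMuExpansion F T) (d : D) : HasEpsMuExpansion (ext d F) fun n => ext d (T n) := by
  intro s
  change d (MvPowerSeries.coeff s F) = _
  rw [hF s, map_sum]
  rfl

lemma map_ext_iterate {D : Type*} [FunLike D A A] [AddMonoidHomClass D A A]
    (hF : HasEpsMuExpansion F T) (d : D) (k : ℕ) :
    HasEpsMuExpansion ((ext d)^[k] F) fun n => (ext d)^[k] (T n) := by
  induction k with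
  | zero => exact hF
  | succ k ih => simpa only [Function.iterate_succ_apply'] using ih.map_ext d

end HasEpsMuExpansion

end Expansion

section Symbol

variable {A : Type} [CommRing A] [Algebra ℂ A]

def extDerivation (d : Derivation ℂ A A) : Derivation ℂ (DPoly A) (DPoly A) :=
  Derivation.mk'
    { toFun := ext d
      map_add' := fun F G => funext fun s => map_add d (F s) (G s)
      map_smul' := fun c F => funext fun s => d.map_smul c (F s) }
    fun F G => by
      classical
      have h : ext d (F * G) = F * ext d G + ext d F * G := by
        ext s
        change d (MvPowerSeries.coeff s (F * G)) = _
        simp only [map_add, MvPowerSeries.coeff_mul, map_sum, ← sum_add_distrib]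
        refine sum_congr rfl fun p _ => ?_
        rw [Derivation.leibniz, smul_eq_mul, smul_eq_mul]
        change _ = MvPowerSeries.coeff p.1 F * d (MvPowerSeries.coeff p.2 G)
          + d (MvPowerSeries.coeff p.1 F) * MvPowerSeries.coeff p.2 G
        ring
      change ext d (F * G) = F * ext d G + G * ext d F
      rw [h, mul_comm (ext d F)]

@[simp] lemma coe_extDerivation (d : Derivation ℂ A A) : ⇑(extDerivation d) = ext d := rfl

variable (dx dy : Derivation ℂ A A) {ι κ : Type*} [Fintype ι] [Fintype κ]

def derivXY (a b : ℕ) (F : DPoly A) : DPoly A := (ext dx)^[a] ((ext dy)^[b] F)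

lemma ext_derivXY_left (a b : ℕ) (F : DPoly A) :
    ext dx (derivXY dx dy a b F) = derivXY dx dy (a + 1) b F :=
  (Function.iterate_succ_apply' _ _ _).symm

lemma ext_derivXY_right (hcomm : ∀ a : A, dx (dy a) = dy (dx a)) (a b : ℕ) (F : DPoly A) :
    ext dy (derivXY dx dy a b F) = derivXY dx dy a (b + 1) F := by
  have hc : Function.Commute (ext dy) (ext dx) := fun F => funext fun s => (hcomm (F s)).symm
  rw [derivXY, hc.iterate_right a, derivXY, Function.iterate_succ_apply']

def monomialDeriv (u : ι → DPoly A) (m : ι × Fin 2 →₀ ℕ) : DPoly A :=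
  ∏ i, derivXY dx dy (m (i, 0)) (m (i, 1)) (u i)

def applySymbol (u : ι → DPoly A) : MvPolynomial (ι × Fin 2) ℂ →ₗ[ℂ] DPoly A :=
  (MvPolynomial.basisMonomials (ι × Fin 2) ℂ).constr ℂ (monomialDeriv dx dy u)

def symbolSum (ι : Type*) [Fintype ι] (k : Fin 2) : MvPolynomial (ι × Fin 2) ℂ :=
  ∑ i, MvPolynomial.X (i, k)

lemma applySymbol_monomial (u : ι → DPoly A) (m : ι × Fin 2 →₀ ℕ) (c : ℂ) :
    applySymbol dx dy u (MvPolynomial.monomial m c) = c • monomialDeriv dx dy u m := by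
  have hbasis := (MvPolynomial.basisMonomials (ι × Fin 2) ℂ).constr_basis ℂ
    (monomialDeriv dx dy u) m
  rw [MvPolynomial.coe_basisMonomials] at hbasis
  rw [← mul_one c, ← smul_eq_mul, ← MvPolynomial.smul_monomial, map_smul, applySymbol, hbasis,
    smul_eq_mul, mul_one]

lemma applySymbol_one_of_unique [Unique ι] (F : DPoly A) :
    applySymbol dx dy (fun _ : ι => F) 1 = F := by
  rw [MvPolynomial.one_def, applySymbol_monomial, one_smul, monomialDeriv,
    Fintype.prod_unique]
  rfl

lemma map_applySymbol (δ : Derivation ℂ (DPoly A) (DPoly A)) (k : Fin 2)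
    (u : ι → DPoly A)
    (hδ : ∀ (m : ι × Fin 2 →₀ ℕ) (i : ι), δ (derivXY dx dy (m (i, 0)) (m (i, 1)) (u i)) =
      derivXY dx dy ((Finsupp.single (i, k) 1 + m : ι × Fin 2 →₀ ℕ) (i, 0))
        ((Finsupp.single (i, k) 1 + m : ι × Fin 2 →₀ ℕ) (i, 1)) (u i))
    (P : MvPolynomial (ι × Fin 2) ℂ) :
    δ (applySymbol dx dy u P) = applySymbol dx dy u (symbolSum ι k * P) := by
  classical
  induction P using MvPolynomial.induction_on' with
  | monomial m c =>
    simp only [symbolSum, sum_mul, MvPolynomial.X, MvPolynomial.monomial_mul, one_mul,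
      map_sum, applySymbol_monomial, Derivation.map_smul, monomialDeriv,
      Derivation.map_prod_eq_sum_update, smul_sum]
    refine sum_congr rfl fun i _ => congrArg _ (prod_congr rfl fun j _ => ?_)
    by_cases hji : j = i
    · subst hji
      rw [Function.update_self, hδ]
    · rw [Function.update_of_ne hji]
      simp [Ne.symm hji]
  | add P Q hP hQ => rw [map_add, map_add, hP, hQ, mul_add, map_add]

lemma derivXY_applySymbol (hcomm : ∀ a : A, dx (dy a) = dy (dx a)) (a b : ℕ) (u : ι → DPoly A)
    (P : MvPolynomial (ι × Fin 2) ℂ) :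
    derivXY dx dy a b (applySymbol dx dy u P) =
      applySymbol dx dy u (symbolSum ι 0 ^ a * symbolSum ι 1 ^ b * P) := by
  have hx : ∀ Q, ext dx (applySymbol dx dy u Q) = applySymbol dx dy u (symbolSum ι 0 * Q) :=
    map_applySymbol dx dy (extDerivation dx) 0 u fun m i => by
      simp [ext_derivXY_left, add_comm]
  have hy : ∀ Q, ext dy (applySymbol dx dy u Q) = applySymbol dx dy u (symbolSum ι 1 * Q) :=
    map_applySymbol dx dy (extDerivation dy) 1 u fun m i => by
      simp [ext_derivXY_right dx dy hcomm, add_comm]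
  have hxa : ∀ Q, (ext dx)^[a] (applySymbol dx dy u Q) =
      applySymbol dx dy u (symbolSum ι 0 ^ a * Q) := by
    induction a with
    | zero => simp
    | succ n ih => intro Q; rw [Function.iterate_succ_apply', ih, hx, pow_succ', mul_assoc]
  have hyb : (ext dy)^[b] (applySymbol dx dy u P) =
      applySymbol dx dy u (symbolSum ι 1 ^ b * P) := by
    induction b with
    | zero => simp
    | succ n ih => rw [Function.iterate_succ_apply', ih, hy, pow_succ', mul_assoc]
  rw [derivXY, hyb, hxa, mul_assoc]

lemma monomialDeriv_sumElim (u : ι → DPoly A) (v : κ → DPoly A) (m : ι × Fin 2 →₀ ℕ)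
    (n : κ × Fin 2 →₀ ℕ) :
    monomialDeriv dx dy (Sum.elim u v)
        (Finsupp.mapDomain (Prod.map Sum.inl id) m + Finsupp.mapDomain (Prod.map Sum.inr id) n) =
      monomialDeriv dx dy u m * monomialDeriv dx dy v n := by
  simp [monomialDeriv, Fintype.prod_sum_type, Finsupp.mapDomain_prodMap_apply Sum.inl_injective,
    Finsupp.mapDomain_prodMap_apply Sum.inr_injective,
    Finsupp.mapDomain_prodMap_apply_of_notMem_range]

lemma applySymbol_mul (u : ι → DPoly A) (v : κ → DPoly A) (P : MvPolynomial (ι × Fin 2) ℂ)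
    (Q : MvPolynomial (κ × Fin 2) ℂ) :
    applySymbol dx dy u P * applySymbol dx dy v Q =
      applySymbol dx dy (Sum.elim u v) (MvPolynomial.rename (Prod.map Sum.inl id) P *
        MvPolynomial.rename (Prod.map Sum.inr id) Q) := by
  induction P using MvPolynomial.induction_on' with
  | monomial m a =>
    induction Q using MvPolynomial.induction_on' with
    | monomial n b =>
      rw [MvPolynomial.rename_monomial, MvPolynomial.rename_monomial, MvPolynomial.monomial_mul,
        applySymbol_monomial, applySymbol_monomial, applySymbol_monomial, monomialDeriv_sumElim,
        smul_mul_smul_comm]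
    | add Q Q' hQ hQ' => rw [map_add, mul_add, hQ, hQ', map_add, mul_add, map_add]
  | add P P' hP hP' => rw [map_add, add_mul, hP, hP', map_add, add_mul, map_add]

lemma applySymbol_comp_equiv (e : κ ≃ ι) (u : ι → DPoly A) (P : MvPolynomial (κ × Fin 2) ℂ) :
    applySymbol dx dy (u ∘ e) P =
      applySymbol dx dy u (MvPolynomial.rename (Prod.map e id) P) := by
  induction P using MvPolynomial.induction_on' with
  | monomial m c =>
    rw [MvPolynomial.rename_monomial, applySymbol_monomial, applySymbol_monomial, monomialDeriv,
      monomialDeriv, ← e.prod_comp]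
    simp [Finsupp.mapDomain_prodMap_apply e.injective]
  | add P Q hP hQ => rw [map_add, map_add, hP, hQ, map_add]

end Symbol

section Moyal

variable {A : Type} [CommRing A] [Algebra ℂ A]

def moyalComponent (dx dy : A → A) (n : ℕ) (F G : DPoly A) : DPoly A :=
  ∑ k ∈ range (n + 1), moyalTerm dx dy F G k (n - k)

lemma moyal_hasEpsMuExpansion (dx dy : A → A) (F G : DPoly A) :
    HasEpsMuExpansion (moyal dx dy F G) fun n => moyalComponent dx dy n F G := by
  intro s
  simp only [moyalComponent, map_sum]
  rfl

variable (dx dy : Derivation ℂ A A) {ι κ ν : Type*} [Fintype ι] [Fintype κ] [Fintype ν]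

namespace HasEpsMuExpansion

variable {F : DPoly A} {T : ℕ → DPoly A}

lemma moyalComponent_left (hF : HasEpsMuExpansion F T) (n : ℕ) (G : DPoly A) :
    HasEpsMuExpansion (moyalComponent dx dy n F G) fun m => moyalComponent dx dy n (T m) G :=
  .sum _ fun k _ => ((hF.map_ext_iterate dy (n - k)).map_ext_iterate dx k).mul_right _ |>.smul _

lemma moyalComponent_right (hF : HasEpsMuExpansion F T) (n : ℕ) (G : DPoly A) :
    HasEpsMuExpansion (moyalComponent dx dy n G F) fun m => moyalComponent dx dy n G (T m) :=
  .sum _ fun k _ => ((hF.map_ext_iterate dy k).map_ext_iterate dx (n - k)).mul_left _ |>.smul _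

end HasEpsMuExpansion

def moyalSymbol (ι κ : Type*) [Fintype ι] [Fintype κ] : MvPolynomial ((ι ⊕ κ) × Fin 2) ℂ :=
  (Complex.I / 2) • (MvPolynomial.rename (Prod.map Sum.inl id) (symbolSum ι 0) *
      MvPolynomial.rename (Prod.map Sum.inr id) (symbolSum κ 1)) +
    (-Complex.I / 2) • (MvPolynomial.rename (Prod.map Sum.inl id) (symbolSum ι 1) *
      MvPolynomial.rename (Prod.map Sum.inr id) (symbolSum κ 0))

lemma moyalComponent_applySymbol (hcomm : ∀ a : A, dx (dy a) = dy (dx a)) (n : ℕ)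
    (u : ι → DPoly A) (v : κ → DPoly A) (P : MvPolynomial (ι × Fin 2) ℂ)
    (Q : MvPolynomial (κ × Fin 2) ℂ) :
    moyalComponent dx dy n (applySymbol dx dy u P) (applySymbol dx dy v Q) =
      applySymbol dx dy (Sum.elim u v) (((n.factorial : ℂ)⁻¹ • moyalSymbol ι κ ^ n) *
        (MvPolynomial.rename (Prod.map Sum.inl id) P *
          MvPolynomial.rename (Prod.map Sum.inr id) Q)) := by
  set x : MvPolynomial ((ι ⊕ κ) × Fin 2) ℂ :=
    (Complex.I / 2) • (MvPolynomial.rename (Prod.map Sum.inl id) (symbolSum ι 0) *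
      MvPolynomial.rename (Prod.map Sum.inr id) (symbolSum κ 1))
  set y : MvPolynomial ((ι ⊕ κ) × Fin 2) ℂ :=
    (-Complex.I / 2) • (MvPolynomial.rename (Prod.map Sum.inl id) (symbolSum ι 1) *
      MvPolynomial.rename (Prod.map Sum.inr id) (symbolSum κ 0))
  have hterm : ∀ k l, moyalTerm dx dy (applySymbol dx dy u P) (applySymbol dx dy v Q) k l =
      applySymbol dx dy (Sum.elim u v) (((k.factorial : ℂ)⁻¹ • x ^ k) *
        ((l.factorial : ℂ)⁻¹ • y ^ l) * (MvPolynomial.rename (Prod.map Sum.inl id) P *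
          MvPolynomial.rename (Prod.map Sum.inr id) Q)) := by
    intro k l
    change _ • (derivXY dx dy k l _ * derivXY dx dy l k _) = _
    rw [derivXY_applySymbol dx dy hcomm, derivXY_applySymbol dx dy hcomm, applySymbol_mul,
      ← map_smul, moyalTerm_scalar_eq]
    congr 1
    simp only [x, y, MvPolynomial.smul_eq_C_mul, map_mul, map_pow]
    ring
  rw [moyalComponent, sum_congr rfl fun k _ => hterm k (n - k), ← map_sum, ← sum_mul,
    sum_range_factorial_smul_pow_mul_pow]
  rfl

lemma rename_sumAssoc_moyalSymbol :
    MvPolynomial.rename (Prod.map (Equiv.sumAssoc ι κ ν).symm id)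
        (moyalSymbol ι (κ ⊕ ν) + MvPolynomial.rename (Prod.map Sum.inr id) (moyalSymbol κ ν)) =
      moyalSymbol (ι ⊕ κ) ν + MvPolynomial.rename (Prod.map Sum.inl id) (moyalSymbol ι κ) := by
  simp only [moyalSymbol, symbolSum, map_add, map_smul, map_mul, map_sum, MvPolynomial.rename_X,
    Prod.map, id, Fintype.sum_sum_type, Equiv.sumAssoc_symm_apply_inl,
    Equiv.sumAssoc_symm_apply_inr_inl, Equiv.sumAssoc_symm_apply_inr_inr]
  simp only [MvPolynomial.smul_eq_C_mul]
  ring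

lemma sum_moyalComponent_moyalComponent_left (hcomm : ∀ a : A, dx (dy a) = dy (dx a)) (N : ℕ)
    (u : ι → DPoly A) (v : κ → DPoly A) (w : ν → DPoly A) :
    ∑ j ∈ range (N + 1), moyalComponent dx dy j
        (moyalComponent dx dy (N - j) (applySymbol dx dy u 1) (applySymbol dx dy v 1))
        (applySymbol dx dy w 1) =
      applySymbol dx dy (Sum.elim (Sum.elim u v) w) ((N.factorial : ℂ)⁻¹ •
        (moyalSymbol (ι ⊕ κ) ν +
          MvPolynomial.rename (Prod.map Sum.inl id) (moyalSymbol ι κ)) ^ N) := by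
  simp only [moyalComponent_applySymbol dx dy hcomm]
  rw [← map_sum]
  congr 1
  simp only [map_one, mul_one, map_smul, map_pow]
  exact sum_range_factorial_smul_pow_mul_pow _ _ N

lemma sum_moyalComponent_moyalComponent_right (hcomm : ∀ a : A, dx (dy a) = dy (dx a)) (N : ℕ)
    (u : ι → DPoly A) (v : κ → DPoly A) (w : ν → DPoly A) :
    ∑ j ∈ range (N + 1), moyalComponent dx dy j (applySymbol dx dy u 1)
        (moyalComponent dx dy (N - j) (applySymbol dx dy v 1) (applySymbol dx dy w 1)) =
      applySymbol dx dy (Sum.elim (Sum.elim u v) w) ((N.factorial : ℂ)⁻¹ •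
        (moyalSymbol (ι ⊕ κ) ν +
          MvPolynomial.rename (Prod.map Sum.inl id) (moyalSymbol ι κ)) ^ N) := by
  have hw : Sum.elim u (Sum.elim v w) =
      Sum.elim (Sum.elim u v) w ∘ (Equiv.sumAssoc ι κ ν).symm := by
    funext x
    rcases x with i | j | k <;> rfl
  simp only [moyalComponent_applySymbol dx dy hcomm]
  rw [← map_sum, hw, applySymbol_comp_equiv]
  congr 1
  simp only [map_one, one_mul, mul_one, map_smul, map_pow]
  rw [sum_range_factorial_smul_pow_mul_pow, ← rename_sumAssoc_moyalSymbol, map_smul, map_pow]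

lemma sum_moyalComponent_assoc (hcomm : ∀ a : A, dx (dy a) = dy (dx a)) (N : ℕ)
    (f g h : DPoly A) :
    ∑ j ∈ range (N + 1), moyalComponent dx dy j (moyalComponent dx dy (N - j) f g) h =
      ∑ j ∈ range (N + 1), moyalComponent dx dy j f (moyalComponent dx dy (N - j) g h) := by
  have hsymb : ∀ F : DPoly A, applySymbol dx dy (fun _ : Unit => F) 1 = F :=
    applySymbol_one_of_unique dx dy
  rw [← hsymb f, ← hsymb g, ← hsymb h, sum_moyalComponent_moyalComponent_left dx dy hcomm,
    sum_moyalComponent_moyalComponent_right dx dy hcomm]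

end Moyal

end

/-- The Moyal star-product is associative: for commuting (ℂ-linear)
derivations `∂_x, ∂_y` of `A` and all `f, g, h` in the algebra `A[[ε,μ]]` of differential
polynomials in two space variables, `(f*g)*h = f*(g*h)`. -/
theorem stmt7 {A : Type} [CommRing A] [Algebra ℂ A] (dx dy : Derivation ℂ A A)
    (hcomm : ∀ a : A, dx (dy a) = dy (dx a)) (f g h : DPoly A) :
    moyal (⇑dx) (⇑dy) (moyal (⇑dx) (⇑dy) f g) h =
      moyal (⇑dx) (⇑dy) f (moyal (⇑dx) (⇑dy) g h) := by
  have hL := (moyal_hasEpsMuExpansion _ _ (moyal (⇑dx) (⇑dy) f g) h).bind fun p =>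
    (moyal_hasEpsMuExpansion _ _ f g).moyalComponent_left dx dy p h
  have hR := (moyal_hasEpsMuExpansion _ _ f (moyal (⇑dx) (⇑dy) g h)).bind fun p =>
    (moyal_hasEpsMuExpansion _ _ g h).moyalComponent_right dx dy p f
  rw [funext fun N => sum_moyalComponent_assoc dx dy hcomm N f g h] at hL
  exact hL.unique hR
end

section
/- In the algebra of pseudo-differential operators ∑_{i≤n} a_i * ∂_x^i with composition (a*∂_x^i)∘(b*∂_x^j) := ∑_{k≥0} binom(i,k) (a * ∂_x^k b) * ∂_x^{i+j-k}, any operator of the form A = ∂_x^2 + ∑_{i<2} a_i*∂_x^i has a unique square root of the form B = ∂_x + ∑_{i<1} b_i*∂_x^i, i.e., a unique such B with B∘B = A. -/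
noncomputable section

/-- The generalized binomial coefficient `binom(i,k) = i(i-1)⋯(i-k+1)/k!` for `i : ℤ`, `k : ℕ`. -/
def zbinom (i : ℤ) (k : ℕ) : ℚ :=
  (∏ j ∈ Finset.range k, ((i : ℚ) - j)) / k.factorial

/-- A pseudo-differential operator `∑_{i ≤ n} a_i * ∂_x^i` is recorded by its coefficient
function `ℤ → C`; operators are required to have support bounded above when relevant. -/
abbrev PDO (C : Type) := ℤ → C

/-- Composition of pseudo-differential operators, induced by
`(a*∂_x^i)∘(b*∂_x^j) := ∑_{k≥0} binom(i,k) (a * ∂_x^k b) * ∂_x^{i+j-k}`: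
the coefficient of `∂_x^m` in `A ∘ B` is `∑_{p,q, k=p+q-m ≥ 0} binom(p,k) · A_p * d^k(B_q)`
(a finite sum when the supports of `A` and `B` are bounded above; `finsum` makes this
well defined). Here `d` is the derivation `∂_x` of the coefficient algebra `C` (e.g. the
Moyal star-product algebra `ℂ[[u_{*,*},μ]][[ε,ε⁻¹]`). -/
def PDO.comp {C : Type} [Ring C] [Algebra ℚ C] (d : C → C) (A B : PDO C) : PDO C :=
  fun m =>
    ∑ᶠ pq : ℤ × ℤ,
      if 0 ≤ pq.1 + pq.2 - m then
        zbinom pq.1 (pq.1 + pq.2 - m).toNat • (A pq.1 * d^[(pq.1 + pq.2 - m).toNat] (B pq.2))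
      else 0

/-!
Write `B = ∂ + ∑_{i ≤ 0} b_i ∂^i`. For `m ≤ 1` the coefficient `b_{m-1}` enters the coefficient of
`∂^m` in `B ∘ B` only through `∂ ∘ b_{m-1}` and `b_{m-1} ∘ ∂`, so that coefficient is `2 b_{m-1}`
plus an expression in `b_m, …, b_1` alone. Hence `B ∘ B = A` is a triangular system
`b_{m-1} = ½ (a_m - …)`, which determines the coefficients one after the other from the top down:
`B` is the unique fixed point of a map computing each coefficient from strictly higher ones.
-/

section TriangularFixedPoint

variable {α : Type*} {F : (ℤ → α) → ℤ → α} {N : ℤ}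

theorem iterate_succ_apply_eq_of_le_add
    (hF : ∀ f g i, (∀ j, i < j → f j = g j) → F f i = F g i)
    (hN : ∀ f g i, N ≤ i → F f i = F g i) (n : ℕ) (f g : ℤ → α) {i : ℤ} (hi : N ≤ i + n) :
    F^[n + 1] f i = F^[n + 1] g i := by
  induction n generalizing i with
  | zero => exact hN f g i (by simpa using hi)
  | succ n ih =>
    rw [Function.iterate_succ_apply' F, Function.iterate_succ_apply' F (n + 1)]
    exact hF _ _ i fun j hj => ih (by push_cast at hi; omega)

theorem iterate_succ_apply_stable
    (hF : ∀ f g i, (∀ j, i < j → f j = g j) → F f i = F g i)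
    (hN : ∀ f g i, N ≤ i → F f i = F g i) (f : ℤ → α) {i : ℤ} {m n : ℕ}
    (him : N ≤ i + m) (hmn : m ≤ n) : F^[n + 1] f i = F^[m + 1] f i := by
  obtain ⟨k, rfl⟩ := Nat.exists_eq_add_of_le hmn
  rw [show m + k + 1 = m + 1 + k by ring, Function.iterate_add_apply]
  exact iterate_succ_apply_eq_of_le_add hF hN m _ _ him

theorem existsUnique_isFixedPt_of_determined_from_above [Nonempty α]
    (hF : ∀ f g i, (∀ j, i < j → f j = g j) → F f i = F g i)
    (hN : ∀ f g i, N ≤ i → F f i = F g i) : ∃! f, Function.IsFixedPt F f := by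
  obtain ⟨f₀⟩ : Nonempty (ℤ → α) := inferInstance
  let fix : ℤ → α := fun i => F^[(N - i).toNat + 1] f₀ i
  refine ⟨fix, funext fun i => ?_, fun g hg => funext fun i => ?_⟩
  · calc F fix i = F (F^[(N - i).toNat + 1] f₀) i :=
          hF _ _ i fun j hj =>
            (iterate_succ_apply_stable hF hN f₀ (m := (N - j).toNat) (by omega) (by omega)).symm
      _ = fix i := by
          rw [← Function.iterate_succ_apply' F]
          exact iterate_succ_apply_stable hF hN f₀ (by omega) (Nat.le_succ _)
  · calc g i = F^[(N - i).toNat + 1] g i := (congrFun (hg.iterate _) i).symm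
      _ = fix i := iterate_succ_apply_eq_of_le_add hF hN _ g f₀ (by omega)

end TriangularFixedPoint

lemma zbinom_zero (i : ℤ) : zbinom i 0 = 1 := by
  simp [zbinom]

namespace PDO

variable {C : Type} [Ring C] [Algebra ℚ C] (d : C → C)

def compTerm (A B : PDO C) (m : ℤ) (pq : ℤ × ℤ) : C :=
  if 0 ≤ pq.1 + pq.2 - m then
    zbinom pq.1 (pq.1 + pq.2 - m).toNat • (A pq.1 * d^[(pq.1 + pq.2 - m).toNat] (B pq.2))
  else 0

lemma compTerm_of_lt {A B : PDO C} {m : ℤ} {pq : ℤ × ℤ} (h : pq.1 + pq.2 < m) :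
    compTerm d A B m pq = 0 :=
  if_neg (by omega)

lemma compTerm_add (A B : PDO C) (p q : ℤ) : compTerm d A B (p + q) (p, q) = A p * B q := by
  simp [compTerm, zbinom_zero]

lemma comp_eq_sum (hd : d 0 = 0) {A B : PDO C} {a b : ℤ} (hA : ∀ i, a < i → A i = 0)
    (hB : ∀ i, b < i → B i = 0) (m : ℤ) :
    comp d A B m = ∑ pq ∈ Finset.Icc (m - b) a ×ˢ Finset.Icc (m - a) b, compTerm d A B m pq := by
  refine finsum_eq_sum_of_support_subset _ fun pq hpq => ?_
  by_contra hbox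
  apply hpq
  simp only [Finset.coe_product, Finset.coe_Icc, Set.mem_prod, Set.mem_Icc] at hbox
  by_cases hp : a < pq.1
  · simp [hA _ hp]
  by_cases hq : b < pq.2
  · simp [hB _ hq, Function.iterate_fixed hd]
  exact compTerm_of_lt d (by omega)

lemma comp_eq_zero_of_lt (hd : d 0 = 0) {A B : PDO C} {a b : ℤ} (hA : ∀ i, a < i → A i = 0)
    (hB : ∀ i, b < i → B i = 0) {m : ℤ} (hm : a + b < m) : comp d A B m = 0 := by
  rw [comp_eq_sum d hd hA hB, Finset.Icc_eq_empty (by omega), Finset.empty_product,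
    Finset.sum_empty]

lemma comp_apply_add (hd : d 0 = 0) {A B : PDO C} {a b : ℤ} (hA : ∀ i, a < i → A i = 0)
    (hB : ∀ i, b < i → B i = 0) : comp d A B (a + b) = A a * B b := by
  rw [comp_eq_sum d hd hA hB, add_sub_cancel_right, add_sub_cancel_left, Finset.Icc_self,
    Finset.Icc_self, Finset.singleton_product_singleton, Finset.sum_singleton, compTerm_add]

def sqRest (B : PDO C) (m : ℤ) : C :=
  ∑ pq ∈ Finset.Icc m 1 ×ˢ Finset.Icc m 1, compTerm d B B m pq

lemma sqRest_congr {B B' : PDO C} {m : ℤ} (h : ∀ j, m ≤ j → B j = B' j) :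
    sqRest d B m = sqRest d B' m := by
  refine Finset.sum_congr rfl fun pq hpq => ?_
  simp only [Finset.mem_product, Finset.mem_Icc] at hpq
  simp only [compTerm, h _ hpq.1.1, h _ hpq.2.1]

lemma comp_self_of_le_one (hd : d 0 = 0) {B : PDO C} (hB1 : B 1 = 1)
    (hBtop : ∀ i, 1 < i → B i = 0) {m : ℤ} (hm : m ≤ 1) :
    comp d B B m = (2 : ℚ) • B (m - 1) + sqRest d B m := by
  have hIcc : Finset.Icc (m - 1) 1 = insert (m - 1) (Finset.Icc m 1) := by
    ext x; simp only [Finset.mem_Icc, Finset.mem_insert]; omega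
  have hx : m - 1 ∉ Finset.Icc m 1 := by simp
  have h1 : (1 : ℤ) ∈ Finset.Icc m 1 := by simp [hm]
  have hrow : ∑ q ∈ Finset.Icc m 1, compTerm d B B m (m - 1, q) = B (m - 1) := by
    rw [Finset.sum_eq_single_of_mem 1 h1 fun q hq hq1 =>
      compTerm_of_lt d (by rw [Finset.mem_Icc] at hq; omega)]
    simpa [hB1] using compTerm_add d B B (m - 1) 1
  have hcol : ∑ p ∈ Finset.Icc m 1, compTerm d B B m (p, m - 1) = B (m - 1) := by
    rw [Finset.sum_eq_single_of_mem 1 h1 fun p hp hp1 =>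
      compTerm_of_lt d (by rw [Finset.mem_Icc] at hp; omega)]
    simpa [hB1] using compTerm_add d B B 1 (m - 1)
  rw [comp_eq_sum d hd hBtop hBtop, hIcc, Finset.sum_product, Finset.sum_insert hx,
    Finset.sum_insert hx, compTerm_of_lt d (by simp only; omega), zero_add, hrow]
  simp_rw [Finset.sum_insert hx]
  rw [Finset.sum_add_distrib, hcol, sqRest, Finset.sum_product, two_smul, add_assoc]

def sqrtStep (A B : PDO C) : PDO C := fun i =>
  if 1 ≤ i then (if i = 1 then 1 else 0) else (2⁻¹ : ℚ) • (A (i + 1) - sqRest d B (i + 1))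

lemma sqrtStep_congr (A B B' : PDO C) (i : ℤ) (h : ∀ j, i < j → B j = B' j) :
    sqrtStep d A B i = sqrtStep d A B' i := by
  rw [sqrtStep, sqrtStep, sqRest_congr d (m := i + 1) fun j hj => h j (by omega)]

lemma sqrtStep_of_one_le (A B B' : PDO C) {i : ℤ} (hi : 1 ≤ i) :
    sqrtStep d A B i = sqrtStep d A B' i := by
  simp only [sqrtStep, if_pos hi]

lemma isFixedPt_sqrtStep_iff (hd : d 0 = 0) {A : PDO C} (hA2 : A 2 = 1)
    (hAtop : ∀ i, 2 < i → A i = 0) (B : PDO C) :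
    Function.IsFixedPt (sqrtStep d A) B ↔
      B 1 = 1 ∧ (∀ i, 1 < i → B i = 0) ∧ comp d B B = A := by
  constructor
  · intro h
    have hB i : B i = sqrtStep d A B i := (congrFun h i).symm
    have hB1 : B 1 = 1 := by rw [hB]; simp [sqrtStep]
    have hBtop i (hi : 1 < i) : B i = 0 := by
      rw [hB]; simp [sqrtStep, hi.le, hi.ne']
    refine ⟨hB1, hBtop, funext fun m => ?_⟩
    rcases lt_trichotomy m 2 with hm | rfl | hm
    · rw [comp_self_of_le_one d hd hB1 hBtop (by omega), hB (m - 1), sqrtStep,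
        if_neg (by omega), sub_add_cancel, smul_smul]
      norm_num
    · rw [hA2]
      exact (comp_apply_add d hd hBtop hBtop).trans (by rw [hB1, mul_one])
    · rw [comp_eq_zero_of_lt d hd hBtop hBtop (by omega), hAtop m hm]
  · rintro ⟨hB1, hBtop, hcomp⟩
    funext i
    unfold sqrtStep
    split_ifs with h1 h2
    · rw [h2, hB1]
    · rw [hBtop i (by omega)]
    · have hAi := comp_self_of_le_one d hd hB1 hBtop (m := i + 1) (by omega)
      rw [hcomp, add_sub_cancel_right] at hAi
      rw [hAi, add_sub_cancel_right, smul_smul]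
      norm_num

end PDO

theorem stmt10_general {C : Type} [Ring C] [Algebra ℚ C] (d : C → C)
    (hd_add : ∀ x y : C, d (x + y) = d x + d y)
    (A : PDO C) (hA2 : A 2 = 1) (hAtop : ∀ i : ℤ, 2 < i → A i = 0) :
    ∃! B : PDO C, B 1 = 1 ∧ (∀ i : ℤ, 1 < i → B i = 0) ∧ PDO.comp d B B = A := by
  have hd : d 0 = 0 := by simpa using hd_add 0 0
  have hfix : ∃! B, Function.IsFixedPt (PDO.sqrtStep d A) B :=
    existsUnique_isFixedPt_of_determined_from_above (N := 1) (PDO.sqrtStep_congr d A)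
      fun B B' _ hi => PDO.sqrtStep_of_one_le d A B B' hi
  simpa only [PDO.isFixedPt_sqrtStep_iff d hd hA2 hAtop] using hfix

/-- In the algebra of pseudo-differential operators over a (possibly
noncommutative) coefficient `ℚ`-algebra `C` equipped with a derivation `d = ∂_x`, any
operator of the form `A = ∂_x² + ∑_{i<2} a_i*∂_x^i` has a unique square root of the form
`B = ∂_x + ∑_{i<1} b_i*∂_x^i`, i.e. a unique such `B` with `B∘B = A`. -/
theorem stmt10 {C : Type} [Ring C] [Algebra ℚ C] (d : C → C)
    (hd_add : ∀ x y : C, d (x + y) = d x + d y)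
    (hd_leibniz : ∀ x y : C, d (x * y) = d x * y + x * d y)
    (A : PDO C) (hA2 : A 2 = 1) (hAtop : ∀ i : ℤ, 2 < i → A i = 0) :
    ∃! B : PDO C, B 1 = 1 ∧ (∀ i : ℤ, 1 < i → B i = 0) ∧ PDO.comp d B B = A :=
  stmt10_general d hd_add A hA2 hAtop
end
end

section
/- Let Γ be a stable graph of genus g with n legs, let A = (a_1,...,a_n) ∈ ℤ^n with ∑a_i = 0, and let r ≥ 1. A weighting mod r of Γ is a function w: H(Γ) → {0,...,r-1} such that w(l_i) ≡ a_i mod r for each leg, w(h)+w(h') ≡ 0 mod r for each edge {h,h'}, and ∑_{h: v(h)=v} w(h) ≡ 0 mod r at each vertex v. Then the number of weightings mod r of Γ equals r^{h^1(Γ)}. -/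
/-!
Weightings with prescribed leg values form a torsor under the group of *cycles*: flows
(functions on half-edges vanishing on legs with `w (ι h) = -w h`) of zero boundary, where the
boundary of `w` at `v` is the sum of `w` over the half-edges at `v`. A torsor point exists
because the leg values sum to `0` and, `Γ` being connected, the boundary map sends flows onto
the functions `V → R` of total sum `0`. A flow is free on one half-edge of each edge, so there
are `|R|^|E|` flows and `|R|^(|V|-1)` boundaries, hence `|R|^(|E|-|V|+1)` cycles.
-/

open Function Finset

theorem card_subtype_sum_eq_zero_mul_card {V R : Type*} [Fintype V] [DecidableEq V] [Nonempty V]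
    [AddCommGroup R] :
    Nat.card {f : V → R // ∑ v, f v = 0} * Nat.card R = Nat.card R ^ Fintype.card V := by
  obtain ⟨v₀⟩ := ‹Nonempty V›
  let e : {f : V → R // ∑ v, f v = 0} × R ≃ (V → R) :=
    { toFun p := p.1.1 + Pi.single v₀ p.2
      invFun g := (⟨g - Pi.single v₀ (∑ v, g v), by simp [sum_sub_distrib]⟩, ∑ v, g v)
      left_inv p := by ext <;> simp [sum_add_distrib, p.1.2]
      right_inv g := by simp }
  rw [← Nat.card_prod, Nat.card_congr e, Nat.card_fun, Nat.card_eq_fintype_card (α := V)]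

namespace HalfEdgeGraph

variable {V H : Type*} (vtx : H → V) (ι : H → H) (R : Type*) [AddCommGroup R]

def flows : AddSubgroup (H → R) where
  carrier := {w | (∀ h, ι h = h → w h = 0) ∧ ∀ h, w h + w (ι h) = 0}
  add_mem' {w u} hw hu :=
    ⟨fun h hh => by simp [hw.1 h hh, hu.1 h hh],
      fun h => by rw [Pi.add_apply, Pi.add_apply, add_add_add_comm, hw.2, hu.2, add_zero]⟩
  zero_mem' := ⟨fun _ _ => rfl, fun _ => add_zero 0⟩
  neg_mem' {w} hw :=
    ⟨fun h hh => by simp [hw.1 h hh], fun h => by simp [← neg_add, hw.2 h]⟩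

variable {ι}

section Orientation

-- Each edge is oriented from its smaller half-edge to its larger one.
variable [LinearOrder H]

def flowsEquivFun (hι : Involutive ι) : flows ι R ≃ ({h // h < ι h} → R) where
  toFun w p := w.1 p
  invFun f :=
    let g : H → R := fun h => if hlt : h < ι h then f ⟨h, hlt⟩ else 0
    ⟨fun h => g h - g (ι h),
      fun h hh => by simp only [hh, sub_self],
      fun h => by simp only [hι h, sub_add_sub_cancel, sub_self]⟩
  left_inv w := by
    obtain ⟨w, hfix, hanti⟩ := w
    ext h
    rcases lt_trichotomy h (ι h) with hlt | heq | hgt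
    · have : ¬ ι h < ι (ι h) := by rw [hι h]; exact hlt.not_gt
      simp [hlt, this]
    · simp [← heq, hfix h heq.symm]
    · simp [hgt.not_gt, hι h, hgt, eq_neg_of_add_eq_zero_left (hanti h)]
  right_inv f := by
    ext p
    have : ¬ ι p.1 < ι (ι p.1) := by rw [hι p.1]; exact p.2.not_gt
    simp [p.2, this]

theorem card_ne_eq_two_mul_card_lt [Finite H] (hι : Involutive ι) :
    Nat.card {h // ι h ≠ h} = 2 * Nat.card {h // h < ι h} := by
  have hdisj : Disjoint (fun h => h < ι h) (fun h => ι h < h) := by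
    rw [Pi.disjoint_iff]
    intro h
    simpa using fun hlt : h < ι h => hlt.le
  have hswap : {h // ι h < h} ≃ {h // h < ι h} :=
    hι.toPerm.subtypeEquiv fun h => by simp [hι h]
  rw [Nat.card_congr ((Equiv.subtypeEquivRight fun h => ne_iff_lt_or_gt.trans or_comm).trans
    (subtypeOrEquiv _ _ hdisj)), Nat.card_sum, Nat.card_congr hswap, two_mul]

end Orientation

theorem card_flows [Finite H] (hι : Involutive ι) :
    Nat.card (flows ι R) = Nat.card R ^ (Nat.card {h // ι h ≠ h} / 2) := by
  let _ : LinearOrder H := IsWellOrder.linearOrder WellOrderingRel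
  rw [Nat.card_congr (flowsEquivFun R hι), Nat.card_fun, card_ne_eq_two_mul_card_lt hι,
    Nat.mul_div_cancel_left _ two_pos]

theorem sum_eq_zero_of_mem_flows [Fintype H] (hι : Involutive ι) {w : H → R}
    (hw : w ∈ flows ι R) : ∑ h, w h = 0 :=
  Finset.sum_involution (fun h _ => ι h) (fun h _ => hw.2 h)
    (fun h _ hwh hfix => hwh (hw.1 h hfix)) (fun _ _ => mem_univ _) (fun h _ => hι h)

theorem single_sub_single_mem_flows (hι : Involutive ι) [DecidableEq H] {h : H} (hh : ι h ≠ h)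
    (c : R) : Pi.single (ι h) c - Pi.single h c ∈ flows ι R := by
  have hswap : ∀ k k', (Pi.single k c : H → R) (ι k') = (Pi.single (ι k) c : H → R) k' :=
    fun k k' => by simp only [Pi.single_apply, hι.eq_iff]
  refine ⟨fun k hk => ?_, fun k => ?_⟩
  · have h₁ : k ≠ h := fun e => hh (e ▸ hk)
    have h₂ : k ≠ ι h := fun e => hh (by rw [e, hι h] at hk; exact hk.symm)
    simp [h₁, h₂]
  · simp only [Pi.sub_apply, hswap, hι h, sub_add_sub_cancel, sub_self]

variable (ι) in
def Adj (x y : V) : Prop := ∃ h, ι h ≠ h ∧ vtx h = x ∧ vtx (ι h) = y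

variable [Fintype H] [DecidableEq V]

def boundary : (H → R) →+ (V → R) where
  toFun w v := ∑ h ∈ univ.filter (fun h => vtx h = v), w h
  map_zero' := by ext; simp
  map_add' w u := by ext; simp [sum_add_distrib]

theorem boundary_apply (w : H → R) (v : V) :
    boundary vtx R w v = ∑ h ∈ univ.filter (fun h => vtx h = v), w h := rfl

theorem boundary_single [DecidableEq H] (h : H) (c : R) :
    boundary vtx R (Pi.single h c) = Pi.single (vtx h) c := by
  ext v
  rw [boundary_apply, sum_pi_single', Pi.single_apply]
  simp [eq_comm]

theorem sum_boundary [Fintype V] (w : H → R) : ∑ v, boundary vtx R w v = ∑ h, w h :=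
  sum_fiberwise univ vtx w

theorem single_sub_single_mem_map_boundary (hι : Involutive ι) {x y : V}
    (hxy : Relation.EqvGen (Adj vtx ι) x y) (c : R) :
    Pi.single y c - Pi.single x c ∈ (flows ι R).map (boundary vtx R) := by
  classical
  induction hxy with
  | rel x y hadj =>
    obtain ⟨h, hh, rfl, rfl⟩ := hadj
    refine ⟨_, single_sub_single_mem_flows R hι hh c, ?_⟩
    rw [map_sub, boundary_single, boundary_single]
  | refl x => simp
  | symm x y _ ih => simpa using neg_mem ih
  | trans x y z _ _ ih₁ ih₂ => simpa using add_mem ih₂ ih₁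

theorem mem_map_boundary_iff [Fintype V] [Nonempty V] (hι : Involutive ι)
    (hconn : ∀ x y, Relation.EqvGen (Adj vtx ι) x y) {f : V → R} :
    f ∈ (flows ι R).map (boundary vtx R) ↔ ∑ v, f v = 0 := by
  constructor
  · rintro ⟨w, hw, rfl⟩
    rw [sum_boundary, sum_eq_zero_of_mem_flows R hι hw]
  · intro hf
    obtain ⟨v₀⟩ := ‹Nonempty V›
    have hdecomp : ∑ v, (Pi.single v (f v) - Pi.single v₀ (f v)) = f := by
      have hsingle : ∑ v, (Pi.single v₀ (f v) : V → R) = Pi.single v₀ (∑ v, f v) :=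
        (map_sum (AddMonoidHom.single (fun _ => R) v₀) f univ).symm
      rw [sum_sub_distrib, univ_sum_single, hsingle, hf, Pi.single_zero, sub_zero]
    rw [← hdecomp]
    exact sum_mem fun v _ => single_sub_single_mem_map_boundary vtx R hι (hconn v₀ v) (f v)

variable (ι) in
def cycles : AddSubgroup (H → R) := flows ι R ⊓ (boundary vtx R).ker

theorem card_flows_eq_card_map_mul_card_cycles :
    Nat.card (flows ι R) =
      Nat.card ((flows ι R).map (boundary vtx R)) * Nat.card (cycles vtx ι R) := by
  let D := (boundary vtx R).domRestrict (flows ι R)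
  have hker : D.ker ≃ cycles vtx ι R := by
    rw [AddMonoidHom.ker_domRestrict, ← AddSubgroup.inf_addSubgroupOf_left]
    exact (AddSubgroup.addSubgroupOfEquivOfLe inf_le_left).toEquiv
  rw [AddSubgroup.card_eq_card_quotient_mul_card_addSubgroup D.ker,
    Nat.card_congr (QuotientAddGroup.quotientKerEquivRange D).toEquiv, Nat.card_congr hker,
    AddMonoidHom.domRestrict_range]

theorem card_cycles_mul [Fintype V] [Nonempty V] (hι : Involutive ι)
    (hconn : ∀ x y, Relation.EqvGen (Adj vtx ι) x y) :
    Nat.card (cycles vtx ι R) * Nat.card R ^ Fintype.card V =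
      Nat.card R ^ (Nat.card {h // ι h ≠ h} / 2 + 1) := by
  have hmap : (flows ι R).map (boundary vtx R) ≃ {f : V → R // ∑ v, f v = 0} :=
    Equiv.subtypeEquivRight fun _ => mem_map_boundary_iff vtx R hι hconn
  rw [← card_subtype_sum_eq_zero_mul_card (V := V) (R := R), pow_succ, ← card_flows R hι,
    card_flows_eq_card_map_mul_card_cycles vtx R, Nat.card_congr hmap]
  ring

-- The same count over `ZMod 2` gives `|V| ≤ |E| + 1`, so the natural subtraction below is exact.
theorem card_le_card_edges_add_one [Fintype V] [Nonempty V] (hι : Involutive ι)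
    (hconn : ∀ x y, Relation.EqvGen (Adj vtx ι) x y) :
    Fintype.card V ≤ Nat.card {h // ι h ≠ h} / 2 + 1 := by
  have h₂ := card_cycles_mul vtx (ZMod 2) hι hconn
  rw [Nat.card_zmod] at h₂
  exact (Nat.pow_dvd_pow_iff_le_right one_lt_two).1 (Dvd.intro_left _ h₂)

theorem card_cycles [Fintype V] [Nonempty V] [Finite R] (hι : Involutive ι)
    (hconn : ∀ x y, Relation.EqvGen (Adj vtx ι) x y) :
    Nat.card (cycles vtx ι R) =
      Nat.card R ^ (Nat.card {h // ι h ≠ h} / 2 + 1 - Fintype.card V) := by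
  refine Nat.eq_of_mul_eq_mul_right (pow_pos (Nat.card_pos (α := R)) (Fintype.card V)) ?_
  rw [card_cycles_mul vtx R hι hconn, ← pow_add,
    Nat.sub_add_cancel (card_le_card_edges_add_one vtx hι hconn)]

variable (ι) in
def IsWeighting (a : {h // ι h = h} → R) (w : H → R) : Prop :=
  (∀ l : {h // ι h = h}, w l = a l) ∧ (∀ h, ι h ≠ h → w h + w (ι h) = 0) ∧
    boundary vtx R w = 0

theorem isWeighting_iff_sub_mem_cycles {a : {h // ι h = h} → R} {w₀ w : H → R}
    (hw₀ : IsWeighting vtx ι R a w₀) :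
    IsWeighting vtx ι R a w ↔ w - w₀ ∈ cycles vtx ι R := by
  obtain ⟨hleg₀, hedge₀, hbd₀⟩ := hw₀
  constructor
  · rintro ⟨hleg, hedge, hbd⟩
    have hfix : ∀ h, ι h = h → (w - w₀) h = 0 := fun h hh => by
      rw [Pi.sub_apply, hleg ⟨h, hh⟩, hleg₀ ⟨h, hh⟩, sub_self]
    refine ⟨⟨hfix, fun h => ?_⟩,
      AddMonoidHom.mem_ker.2 (by rw [map_sub, hbd, hbd₀, sub_zero])⟩
    by_cases hh : ι h = h
    · rw [hh, hfix h hh, add_zero]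
    · rw [Pi.sub_apply, Pi.sub_apply, sub_add_sub_comm, hedge h hh, hedge₀ h hh, sub_self]
  · rintro ⟨⟨hfix, hanti⟩, hbd⟩
    replace hbd : boundary vtx R (w - w₀) = 0 := hbd
    rw [← sub_add_cancel w w₀]
    refine ⟨fun l => ?_, fun h hh => ?_, by rw [map_add, hbd, hbd₀, add_zero]⟩
    · rw [Pi.add_apply, hfix l l.2, hleg₀, zero_add]
    · rw [Pi.add_apply, Pi.add_apply, add_add_add_comm, hanti h, hedge₀ h hh, add_zero]

theorem exists_isWeighting [Fintype V] [Nonempty V] [DecidableEq H] (hι : Involutive ι)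
    (hconn : ∀ x y, Relation.EqvGen (Adj vtx ι) x y) (a : {h // ι h = h} → R)
    (ha : ∑ l, a l = 0) : ∃ w, IsWeighting vtx ι R a w := by
  let w₁ : H → R := fun h => if hh : ι h = h then a ⟨h, hh⟩ else 0
  have hw₁ : ∑ h, w₁ h = 0 := by
    have hleg : ∀ l : {h // ι h = h}, w₁ l = a l := fun l => dif_pos l.2
    have hedge : ∀ h : {h // ¬ι h = h}, w₁ h = 0 := fun h => dif_neg h.2
    rw [← Fintype.sum_subtype_add_sum_subtype (fun h => ι h = h)]
    simp only [hleg, hedge, ha, sum_const_zero, add_zero]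
  obtain ⟨u, hu, hbd⟩ := (mem_map_boundary_iff vtx R hι hconn).2
    (show ∑ v, (-boundary vtx R w₁) v = 0 by
      simp only [Pi.neg_apply, sum_neg_distrib, sum_boundary, hw₁, neg_zero])
  refine ⟨w₁ + u, fun l => ?_, fun h hh => ?_, by rw [map_add, hbd, add_neg_cancel]⟩
  · simp [w₁, l.2, hu.1 l l.2]
  · have hh' : ι (ι h) ≠ ι h := by rwa [hι h, ne_comm]
    simp [w₁, hh, hh', hu.2 h]

theorem card_isWeighting [Fintype V] [Nonempty V] [DecidableEq H] [Finite R]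
    (hι : Involutive ι) (hconn : ∀ x y, Relation.EqvGen (Adj vtx ι) x y)
    (a : {h // ι h = h} → R) (ha : ∑ l, a l = 0) :
    Nat.card {w // IsWeighting vtx ι R a w} =
      Nat.card R ^ (Nat.card {h // ι h ≠ h} / 2 + 1 - Fintype.card V) := by
  obtain ⟨w₀, hw₀⟩ := exists_isWeighting vtx R hι hconn a ha
  rw [← card_cycles vtx R hι hconn]
  exact Nat.card_congr ((Equiv.subRight w₀).subtypeEquiv fun w =>
    isWeighting_iff_sub_mem_cycles vtx R hw₀)

end HalfEdgeGraph

theorem stmt12_general (V H : Type) [Fintype V] [Fintype H] [DecidableEq V] [DecidableEq H]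
    [Nonempty V]
    (vtx : H → V) (ι : H → H) (hι : Function.Involutive ι)
    -- connectedness of the graph `(V, E)`
    (hconn : ∀ v w : V, Relation.EqvGen
      (fun x y => ∃ h : H, ι h ≠ h ∧ vtx h = x ∧ vtx (ι h) = y) v w)
    -- the legs, in bijection with `{1,…,n}`, with double ramification data `A`
    (n : ℕ) (legs : Fin n ≃ {h : H // ι h = h}) (A : Fin n → ℤ) (hA : ∑ i, A i = 0)
    (r : ℕ) (hr : 1 ≤ r) :
    Nat.card {w : H → ZMod r //
        (∀ i : Fin n, w (legs i) = (A i : ZMod r)) ∧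
        (∀ h : H, ι h ≠ h → w h + w (ι h) = 0) ∧
        (∀ v : V, ∑ h ∈ Finset.univ.filter (fun h => vtx h = v), w h = 0)} =
      r ^ (Fintype.card {h : H // ι h ≠ h} / 2 + 1 - Fintype.card V) := by
  have : NeZero r := ⟨by omega⟩
  let a : {h // ι h = h} → ZMod r := fun l => A (legs.symm l)
  have ha : ∑ l, a l = 0 := by
    rw [← legs.sum_comp]
    simp [a, ← Int.cast_sum, hA]
  have hweight : ∀ w : H → ZMod r,
      ((∀ i, w (legs i) = (A i : ZMod r)) ∧ (∀ h, ι h ≠ h → w h + w (ι h) = 0) ∧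
        ∀ v, ∑ h ∈ Finset.univ.filter (fun h => vtx h = v), w h = 0) ↔
      HalfEdgeGraph.IsWeighting vtx ι (ZMod r) a w := fun w =>
    and_congr
      ⟨fun h l => by simpa [a] using h (legs.symm l), fun h i => by simpa [a] using h (legs i)⟩
      (and_congr_right' funext_iff.symm)
  rw [Nat.card_congr (Equiv.subtypeEquivRight hweight),
    HalfEdgeGraph.card_isWeighting vtx _ hι hconn a ha, Nat.card_zmod, Nat.card_eq_fintype_card]

/-- Let `Γ` be a stable graph of genus `g` with `n` legs (vertices `V` with
genera `gV`, half-edges `H` with vertex map `vtx` and involution `ι` whose fixed points are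
the legs, in bijection with `{1,…,n}`, and whose 2-orbits are the edges; `(V,E)` connected),
let `A = (a_1,…,a_n) ∈ ℤⁿ` with `∑ a_i = 0`, and let `r ≥ 1`.  A weighting mod `r` of `Γ` is a
function `w : H → ℤ/r` such that `w(l_i) ≡ a_i` for each leg, `w(h) + w(ι h) ≡ 0` for each
edge, and `∑_{h : vtx h = v} w(h) ≡ 0` at each vertex `v`.  Then the number of weightings
mod `r` of `Γ` equals `r^{h¹(Γ)}`, where `h¹(Γ) = |E| - |V| + 1`. -/
theorem stmt12 (V H : Type) [Fintype V] [Fintype H] [DecidableEq V] [DecidableEq H]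
    [Nonempty V]
    (gV : V → ℕ) (vtx : H → V) (ι : H → H) (hι : Function.Involutive ι)
    -- connectedness of the graph `(V, E)`
    (hconn : ∀ v w : V, Relation.EqvGen
      (fun x y => ∃ h : H, ι h ≠ h ∧ vtx h = x ∧ vtx (ι h) = y) v w)
    -- stability at each vertex: `2 g(v) - 2 + n(v) > 0`
    (hstab : ∀ v : V, 2 < 2 * gV v + Fintype.card {h : H // vtx h = v})
    -- the legs, in bijection with `{1,…,n}`, with double ramification data `A`
    (n : ℕ) (legs : Fin n ≃ {h : H // ι h = h}) (A : Fin n → ℤ) (hA : ∑ i, A i = 0)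
    (r : ℕ) (hr : 1 ≤ r) :
    Nat.card {w : H → ZMod r //
        (∀ i : Fin n, w (legs i) = (A i : ZMod r)) ∧
        (∀ h : H, ι h ≠ h → w h + w (ι h) = 0) ∧
        (∀ v : V, ∑ h ∈ Finset.univ.filter (fun h => vtx h = v), w h = 0)} =
      r ^ (Fintype.card {h : H // ι h ≠ h} / 2 + 1 - Fintype.card V) :=
  stmt12_general V H vtx ι hι hconn n legs A hA r hr
end
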